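/- arXiv:2504.17176 — 2 statements merged into one kernel-verified Lean document; each statement's English description precedes it below -/
import Mathlib

section
/- The matrix I − e^{2ΔS} is invertible, and for every bounded measurable function g : [0,Δ] → ℝ one has ∫_{w=0}^{Δ} a (e^{S(Δ−w)} + e^{S(Δ+w)}) (I − e^{2ΔS})^{−1} s · g(w) dw = ∫_{x=0}^{∞} a e^{Sx} s · g(|x mod 2Δ − Δ|) dx, where both integrals converge absolutely. -/
/-!
Put `M = e^{2ΔS}` and `G x = g (|x mod 2Δ - Δ|)`. Since `Mⁿ = e^{2nΔS} → 0`, a fixed vector of `M`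
would be fixed by every `Mⁿ` and hence vanish, so `1 - M` is invertible. As `G` is `2Δ`-periodic, the
row vector `V = ∫₀^∞ G(x) a e^{xS} dx` satisfies `V = ∫₀^{2Δ} G(x) a e^{xS} dx + V M`, i.e.
`V = (∫₀^{2Δ} G(x) a e^{xS} dx) (1 - M)⁻¹`. Substituting `x = Δ ∓ w` folds `[0, 2Δ]` onto `[0, Δ]`,
where `G(Δ ∓ w) = g(w)`; pairing with `s` gives the identity.
-/

open MeasureTheory Matrix

section
attribute [local instance] Matrix.linftyOpNormedRing Matrix.linftyOpNormedAlgebra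

-- Continuity only depends on the topology, and the operator norm makes matrices a Banach algebra.
theorem Matrix.continuous_exp_smul {n : Type*} [Fintype n] [DecidableEq n]
    (A : Matrix n n ℝ) : Continuous fun x : ℝ => NormedSpace.exp (x • A) :=
  NormedSpace.exp_continuous.comp (continuous_id.smul continuous_const)

end

attribute [local instance] Matrix.normedAddCommGroup Matrix.normedSpace

/-- `e^{xS}` : the matrix exponential of `x • S`. -/
noncomputable def mexp {p : ℕ} (S : Matrix (Fin p) (Fin p) ℝ) (x : ℝ) :
    Matrix (Fin p) (Fin p) ℝ := NormedSpace.exp (x • S)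

/-- The representative of `x` modulo `2Δ` lying in `[0, 2Δ)`. -/
noncomputable def rmod (Δ x : ℝ) : ℝ := 2 * Δ * Int.fract (x / (2 * Δ))

open Filter Set Topology

theorem Matrix.isUnit_one_sub_of_tendsto_pow_nhds_zero {n K : Type*} [Fintype n] [DecidableEq n]
    [Field K] [TopologicalSpace K] [IsTopologicalRing K] [T2Space K] {M : Matrix n n K}
    (hM : Tendsto (fun k : ℕ => M ^ k) atTop (𝓝 0)) : IsUnit (1 - M) := by
  rw [isUnit_iff_isUnit_det, isUnit_iff_ne_zero]
  intro hdet
  obtain ⟨v, hv0, hv⟩ := exists_mulVec_eq_zero_iff.2 hdet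
  have hfix : M *ᵥ v = v := by
    rw [sub_mulVec, one_mulVec, sub_eq_zero] at hv
    exact hv.symm
  have hpow : ∀ k : ℕ, (M ^ k) *ᵥ v = v := by
    intro k
    induction k with
    | zero => simp
    | succ k ih => rw [pow_succ, ← mulVec_mulVec, hfix, ih]
  have hlim : Tendsto (fun k : ℕ => (M ^ k) *ᵥ v) atTop (𝓝 (0 *ᵥ v)) :=
    ((continuous_id.matrix_mulVec continuous_const).tendsto 0).comp hM
  simp only [hpow, zero_mulVec, tendsto_const_nhds_iff] at hlim
  exact hv0 hlim

section mexp

variable {p : ℕ}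

theorem continuous_mexp (S : Matrix (Fin p) (Fin p) ℝ) : Continuous (mexp S) :=
  Matrix.continuous_exp_smul S

theorem mexp_add (S : Matrix (Fin p) (Fin p) ℝ) (x y : ℝ) :
    mexp S (x + y) = mexp S x * mexp S y := by
  rw [mexp, add_smul]
  exact Matrix.exp_add_of_commute _ _ (((Commute.refl S).smul_left x).smul_right y)

theorem mexp_natCast_mul (S : Matrix (Fin p) (Fin p) ℝ) (k : ℕ) (x : ℝ) :
    mexp S (k * x) = mexp S x ^ k := by
  rw [mexp, mexp, ← Matrix.exp_nsmul, mul_smul, Nat.cast_smul_eq_nsmul]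

theorem isUnit_one_sub_mexp {S : Matrix (Fin p) (Fin p) ℝ} (hS : Tendsto (mexp S) atTop (𝓝 0))
    {T : ℝ} (hT : 0 < T) : IsUnit (1 - mexp S T) := by
  refine Matrix.isUnit_one_sub_of_tendsto_pow_nhds_zero ?_
  simp_rw [← mexp_natCast_mul]
  exact hS.comp (tendsto_natCast_atTop_atTop.atTop_mul_const hT)

end mexp

section fold

variable {Δ : ℝ}

theorem rmod_eq_toIcoMod (hΔ : 0 < Δ) (x : ℝ) :
    rmod Δ x = toIcoMod (by positivity : (0 : ℝ) < 2 * Δ) 0 x := by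
  rw [toIcoMod_eq_fract_mul, rmod, mul_comm]

theorem rmod_mem_Ico (hΔ : 0 < Δ) (x : ℝ) : rmod Δ x ∈ Ico 0 (2 * Δ) := by
  simpa [rmod_eq_toIcoMod hΔ] using toIcoMod_mem_Ico' _ x

theorem rmod_add_two_mul (hΔ : 0 < Δ) (x : ℝ) : rmod Δ (x + 2 * Δ) = rmod Δ x := by
  simp only [rmod_eq_toIcoMod hΔ, toIcoMod_add_right]

noncomputable def foldMap (Δ x : ℝ) : ℝ := |rmod Δ x - Δ|

theorem measurable_foldMap : Measurable (foldMap Δ) :=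
  (((measurable_fract.comp (measurable_id.div_const _)).const_mul _).sub_const _).abs

theorem foldMap_mem_Icc (hΔ : 0 < Δ) (x : ℝ) : foldMap Δ x ∈ Icc 0 Δ := by
  obtain ⟨h0, h2⟩ := rmod_mem_Ico hΔ x
  exact ⟨abs_nonneg _, abs_le.2 ⟨by linarith, by linarith⟩⟩

theorem periodic_foldMap (hΔ : 0 < Δ) : Function.Periodic (foldMap Δ) (2 * Δ) := fun x => by
  rw [foldMap, foldMap, rmod_add_two_mul hΔ]

theorem foldMap_self_add (hΔ : 0 < Δ) {w : ℝ} (hw : |w| ≤ Δ) : foldMap Δ (Δ + w) = |w| := by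
  obtain ⟨hlow, hup⟩ := abs_le.1 hw
  rcases hup.lt_or_eq with hlt | heq
  · rw [foldMap, rmod_eq_toIcoMod hΔ, (toIcoMod_eq_self _).2 ⟨by linarith, by linarith⟩,
      add_sub_cancel_left]
  · have hrmod : rmod Δ (Δ + Δ) = 0 := by
      rw [← two_mul, ← zero_add (2 * Δ), rmod_add_two_mul hΔ]
      simp [rmod]
    rw [heq, foldMap, hrmod, zero_sub, abs_neg]

theorem foldMap_self_sub (hΔ : 0 < Δ) {w : ℝ} (hw : |w| ≤ Δ) : foldMap Δ (Δ - w) = |w| := by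
  rw [sub_eq_add_neg, foldMap_self_add hΔ (by rwa [abs_neg]), abs_neg]

end fold

section integral

variable {E : Type*} [NormedAddCommGroup E] [NormedSpace ℝ E]

theorem integral_Ici_eq_integral_Ico_add_of_map_add [CompleteSpace E] {F : ℝ → E} {T : ℝ}
    (hT : 0 ≤ T) (L : E →L[ℝ] E) (hF : IntegrableOn F (Ici 0))
    (hshift : ∀ x ∈ Ici 0, F (x + T) = L (F x)) :
    ∫ x in Ici 0, F x = (∫ x in Ico 0 T, F x) + L (∫ x in Ici 0, F x) := by
  have htail : ∫ x in Ici T, F x = L (∫ x in Ici 0, F x) := by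
    have h := (measurePreserving_add_right volume T).setIntegral_preimage_emb
      (measurableEmbedding_addRight T) F (Ici T)
    rw [preimage_add_const_Ici, sub_self] at h
    rw [← h, setIntegral_congr_fun measurableSet_Ici hshift, L.integral_comp_comm hF]
  calc ∫ x in Ici 0, F x = ∫ x in Ico 0 T ∪ Ici T, F x := by rw [Ico_union_Ici_eq_Ici hT]
    _ = (∫ x in Ico 0 T, F x) + ∫ x in Ici T, F x :=
      setIntegral_union ((Iio_disjoint_Ici le_rfl).mono_left Ico_subset_Iio_self)
        measurableSet_Ici (hF.mono_set Ico_subset_Ici_self) (hF.mono_set (Ici_subset_Ici.2 hT))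
    _ = _ := by rw [htail]

theorem MeasureTheory.IntegrableOn.fold_and_integral_Ico_eq {f : ℝ → E} {Δ : ℝ} (hΔ : 0 ≤ Δ)
    (hf : IntegrableOn f (Icc 0 (2 * Δ))) :
    IntegrableOn (fun w => f (Δ - w) + f (Δ + w)) (Icc 0 Δ) ∧
      ∫ x in Ico 0 (2 * Δ), f x = ∫ w in Icc 0 Δ, (f (Δ - w) + f (Δ + w)) := by
  have hf' : IntervalIntegrable f volume 0 (2 * Δ) :=
    (intervalIntegrable_iff_integrableOn_Icc_of_le (by linarith)).2 hf
  have hmid : Δ ∈ uIcc 0 (2 * Δ) := by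
    rw [uIcc_of_le (by linarith)]
    exact ⟨hΔ, by linarith⟩
  have hlow : IntervalIntegrable f volume 0 Δ :=
    hf'.mono_set (uIcc_subset_uIcc left_mem_uIcc hmid)
  have hup : IntervalIntegrable f volume Δ (2 * Δ) :=
    hf'.mono_set (uIcc_subset_uIcc hmid right_mem_uIcc)
  have hreflect : IntervalIntegrable (fun w => f (Δ - w)) volume 0 Δ := by
    simpa using (hlow.comp_sub_left Δ).symm
  have hshift : IntervalIntegrable (fun w => f (Δ + w)) volume 0 Δ := by
    simpa [two_mul] using hup.comp_add_left Δ
  refine ⟨(intervalIntegrable_iff_integrableOn_Icc_of_le hΔ).1 (hreflect.add hshift), ?_⟩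
  rw [integral_Ico_eq_integral_Ioc, integral_Icc_eq_integral_Ioc,
    ← intervalIntegral.integral_of_le hΔ, ← intervalIntegral.integral_of_le (by linarith),
    intervalIntegral.integral_add hreflect hshift, intervalIntegral.integral_comp_sub_left,
    intervalIntegral.integral_comp_add_left,
    ← intervalIntegral.integral_add_adjacent_intervals hlow hup]
  simp [two_mul]

end integral

theorem Matrix.norm_vecMul_le {m n : Type*} [Fintype m] [Fintype n] (a : m → ℝ)
    (A : Matrix m n ℝ) : ‖a ᵥ* A‖ ≤ (∑ i, ‖a i‖) * ‖A‖ := by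
  refine (pi_norm_le_iff_of_nonneg (by positivity)).2 fun j => ?_
  calc ‖(a ᵥ* A) j‖ = ‖∑ i, a i * A i j‖ := rfl
    _ ≤ ∑ i, ‖a i‖ * ‖A‖ := (norm_sum_le _ _).trans (Finset.sum_le_sum fun i _ => by
        rw [norm_mul]
        exact mul_le_mul_of_nonneg_left (norm_entry_le_entrywise_sup_norm A) (norm_nonneg _))
    _ = (∑ i, ‖a i‖) * ‖A‖ := (Finset.sum_mul ..).symm

theorem MeasureTheory.IntegrableOn.bdd_smul_vecMul {n : Type*} [Fintype n] {K : ℝ → Matrix n n ℝ}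
    {s : Set ℝ} (hK_int : IntegrableOn (fun x => ‖K x‖) s) (hK : Continuous K) (a : n → ℝ)
    {G : ℝ → ℝ} (hG : Measurable G) {C : ℝ} (hGC : ∀ x, |G x| ≤ C) :
    IntegrableOn (fun x => G x • (a ᵥ* K x)) s := by
  refine Integrable.mono' (hK_int.const_mul (C * ∑ i, ‖a i‖))
    (hG.aestronglyMeasurable.smul (continuous_const.matrix_vecMul hK).aestronglyMeasurable) ?_
  refine ae_of_all _ fun x => ?_
  rw [norm_smul, Real.norm_eq_abs, mul_assoc]
  exact mul_le_mul (hGC x) (norm_vecMul_le a (K x)) (norm_nonneg _) ((abs_nonneg _).trans (hGC x))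

section mexpIntegral

variable {p : ℕ} {S : Matrix (Fin p) (Fin p) ℝ}

theorem integral_Ici_smul_vecMul_mexp_of_periodic (hS : Tendsto (mexp S) atTop (𝓝 0)) {T : ℝ}
    (hT : 0 < T) {G : ℝ → ℝ} (hG : Function.Periodic G T) (a : Fin p → ℝ)
    (hint : IntegrableOn (fun x => G x • (a ᵥ* mexp S x)) (Ici 0)) :
    ∫ x in Ici 0, G x • (a ᵥ* mexp S x) =
      (∫ x in Ico 0 T, G x • (a ᵥ* mexp S x)) ᵥ* (1 - mexp S T)⁻¹ := by
  have hdet : IsUnit (1 - mexp S T).det :=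
    (isUnit_iff_isUnit_det _).1 (isUnit_one_sub_mexp hS hT)
  have hrec := integral_Ici_eq_integral_Ico_add_of_map_add hT.le
    (mexp S T).vecMulLinear.toContinuousLinearMap hint
    (fun x _ => by simp [hG x, mexp_add, vecMul_vecMul])
  have hsolve : (∫ x in Ici 0, G x • (a ᵥ* mexp S x)) ᵥ* (1 - mexp S T) =
      ∫ x in Ico 0 T, G x • (a ᵥ* mexp S x) := by
    simp only [LinearMap.coe_toContinuousLinearMap', vecMulLinear_apply] at hrec
    rw [vecMul_sub, vecMul_one, sub_eq_iff_eq_add, ← hrec]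
  rw [← hsolve, vecMul_vecMul, mul_nonsing_inv _ hdet, vecMul_one]

theorem integral_Ici_foldMap_smul_vecMul_mexp (hS : Tendsto (mexp S) atTop (𝓝 0))
    (hS_int : IntegrableOn (fun x => ‖mexp S x‖) (Ici 0)) (a : Fin p → ℝ) {Δ : ℝ} (hΔ : 0 < Δ)
    {g : ℝ → ℝ} (hg : Measurable g) {C : ℝ} (hC : ∀ w ∈ Icc 0 Δ, |g w| ≤ C) :
    IntegrableOn (fun x => g (foldMap Δ x) • (a ᵥ* mexp S x)) (Ici 0) ∧
      IntegrableOn (fun w => g w • (a ᵥ* (mexp S (Δ - w) + mexp S (Δ + w)))) (Icc 0 Δ) ∧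
      ∫ x in Ici 0, g (foldMap Δ x) • (a ᵥ* mexp S x) =
        (∫ w in Icc 0 Δ, g w • (a ᵥ* (mexp S (Δ - w) + mexp S (Δ + w)))) ᵥ*
          (1 - mexp S (2 * Δ))⁻¹ := by
  have hint : IntegrableOn (fun x => g (foldMap Δ x) • (a ᵥ* mexp S x)) (Ici 0) :=
    hS_int.bdd_smul_vecMul (continuous_mexp S) a (hg.comp measurable_foldMap)
      fun x => hC _ (foldMap_mem_Icc hΔ x)
  obtain ⟨hfold_int, hfold⟩ := (hint.mono_set Icc_subset_Ici_self).fold_and_integral_Ico_eq hΔ.le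
  have hkernel : EqOn
      (fun w => g (foldMap Δ (Δ - w)) • (a ᵥ* mexp S (Δ - w)) +
        g (foldMap Δ (Δ + w)) • (a ᵥ* mexp S (Δ + w)))
      (fun w => g w • (a ᵥ* (mexp S (Δ - w) + mexp S (Δ + w)))) (Icc 0 Δ) := fun w hw => by
    have habs : |w| ≤ Δ := abs_le.2 ⟨by linarith [hw.1], hw.2⟩
    simp only [foldMap_self_sub hΔ habs, foldMap_self_add hΔ habs, abs_of_nonneg hw.1,
      vecMul_add, smul_add]
  refine ⟨hint, hfold_int.congr_fun hkernel measurableSet_Icc, ?_⟩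
  rw [integral_Ici_smul_vecMul_mexp_of_periodic hS (by positivity) 
      (G := fun x => g (foldMap Δ x)) (fun x => congrArg g (periodic_foldMap hΔ x)) a hint, hfold,
    setIntegral_congr_fun measurableSet_Icc hkernel]

end mexpIntegral

noncomputable def Matrix.dotProductCLM {n : Type*} [Fintype n] (t : n → ℝ) :
    (n → ℝ) →L[ℝ] ℝ :=
  LinearMap.toContinuousLinearMap ((dotProductBilin ℝ ℝ).flip t)

@[simp]
theorem Matrix.dotProductCLM_apply {n : Type*} [Fintype n] (t v : n → ℝ) :
    dotProductCLM t v = v ⬝ᵥ t := rfl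

theorem folded_kernel_identity_general
    (p : ℕ) (S : Matrix (Fin p) (Fin p) ℝ)
    (hS0 : Filter.Tendsto (fun x : ℝ => mexp S x) Filter.atTop (nhds 0))
    (hSint : IntegrableOn (fun x : ℝ => ‖mexp S x‖) (Set.Ici 0))
    (a s : Fin p → ℝ) (Δ : ℝ) (hΔ : 0 < Δ) :
    IsUnit (1 - mexp S (2 * Δ))
    ∧ ∀ g : ℝ → ℝ, Measurable g → (∃ C : ℝ, ∀ w ∈ Set.Icc (0 : ℝ) Δ, |g w| ≤ C) →
        IntegrableOn
          (fun w : ℝ =>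
            ((a ᵥ* (mexp S (Δ - w) + mexp S (Δ + w)) ᵥ* (1 - mexp S (2 * Δ))⁻¹) ⬝ᵥ s) * g w)
          (Set.Icc 0 Δ)
        ∧ IntegrableOn
            (fun x : ℝ => ((a ᵥ* mexp S x) ⬝ᵥ s) * g (|rmod Δ x - Δ|)) (Set.Ici 0)
        ∧ (∫ w in Set.Icc (0 : ℝ) Δ,
              ((a ᵥ* (mexp S (Δ - w) + mexp S (Δ + w)) ᵥ* (1 - mexp S (2 * Δ))⁻¹) ⬝ᵥ s) * g w)
          = ∫ x in Set.Ici (0 : ℝ), ((a ᵥ* mexp S x) ⬝ᵥ s) * g (|rmod Δ x - Δ|) := by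
  refine ⟨isUnit_one_sub_mexp hS0 (by positivity), fun g hg ⟨C, hC⟩ => ?_⟩
  obtain ⟨hint, hfold_int, hfold⟩ := integral_Ici_foldMap_smul_vecMul_mexp hS0 hSint a hΔ hg hC
  set N := (1 - mexp S (2 * Δ))⁻¹
  have hLHS : ∀ w, ((a ᵥ* (mexp S (Δ - w) + mexp S (Δ + w)) ᵥ* N) ⬝ᵥ s) * g w =
      dotProductCLM (N *ᵥ s) (g w • (a ᵥ* (mexp S (Δ - w) + mexp S (Δ + w)))) := fun w => by
    simp [dotProduct_mulVec, mul_comm]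
  have hRHS : ∀ x, ((a ᵥ* mexp S x) ⬝ᵥ s) * g |rmod Δ x - Δ| =
      dotProductCLM s (g (foldMap Δ x) • (a ᵥ* mexp S x)) := fun x => by
    simp [foldMap, mul_comm]
  simp only [hLHS, hRHS]
  refine ⟨(dotProductCLM (N *ᵥ s)).integrable_comp hfold_int,
    (dotProductCLM s).integrable_comp hint, ?_⟩
  rw [(dotProductCLM (N *ᵥ s)).integral_comp_comm hfold_int,
    (dotProductCLM s).integral_comp_comm hint, hfold, dotProductCLM_apply, dotProductCLM_apply,
    dotProduct_mulVec]

/-- `I - e^{2ΔS}` is invertible and the folded-kernel identity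
`∫₀^Δ a (e^{S(Δ-w)} + e^{S(Δ+w)}) (I - e^{2ΔS})⁻¹ s · g(w) dw
  = ∫₀^∞ a e^{Sx} s · g(|x mod 2Δ - Δ|) dx` holds, both integrals converging
absolutely. -/
theorem folded_kernel_identity
    (p : ℕ) (hp : 1 ≤ p) (S : Matrix (Fin p) (Fin p) ℝ)
    (hS0 : Filter.Tendsto (fun x : ℝ => mexp S x) Filter.atTop (nhds 0))
    (hSint : IntegrableOn (fun x : ℝ => ‖mexp S x‖) (Set.Ici 0))
    (a s : Fin p → ℝ) (Δ : ℝ) (hΔ : 0 < Δ) :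
    IsUnit (1 - mexp S (2 * Δ))
    ∧ ∀ g : ℝ → ℝ, Measurable g → (∃ C : ℝ, ∀ w ∈ Set.Icc (0 : ℝ) Δ, |g w| ≤ C) →
        IntegrableOn
          (fun w : ℝ =>
            ((a ᵥ* (mexp S (Δ - w) + mexp S (Δ + w)) ᵥ* (1 - mexp S (2 * Δ))⁻¹) ⬝ᵥ s) * g w)
          (Set.Icc 0 Δ)
        ∧ IntegrableOn
            (fun x : ℝ => ((a ᵥ* mexp S x) ⬝ᵥ s) * g (|rmod Δ x - Δ|)) (Set.Ici 0)
        ∧ (∫ w in Set.Icc (0 : ℝ) Δ,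
              ((a ᵥ* (mexp S (Δ - w) + mexp S (Δ + w)) ᵥ* (1 - mexp S (2 * Δ))⁻¹) ⬝ᵥ s) * g w)
          = ∫ x in Set.Ici (0 : ℝ), ((a ᵥ* mexp S x) ⬝ᵥ s) * g (|rmod Δ x - Δ|) :=
  folded_kernel_identity_general p S hS0 hSint a s Δ hΔ
end

section
/- (Lemma: the closing operator evaluates g at the grid point.) Suppose 0 < v^{1/3} < 1 and let t satisfy 0 ≤ t < Δ − v^{1/3}. Let g : [0,Δ] → ℝ be bounded with |g(x)| ≤ G and Lipschitz continuous with |g(x) − g(y)| ≤ L|x−y| for all x, y ∈ [0,Δ]. Then ℙ(Z ≥ t) > 0 and | 𝔼[ g(|((Z−t) mod 2Δ) − Δ|) | Z ≥ t ] − g(t) | ≤ (2G + L) · v^{1/3} / (1 − v^{1/3}). -/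
open MeasureTheory ProbabilityTheory

/-!
Chebyshev's inequality with threshold `ε = v^{1/3}` puts `Z` within `ε` of `Δ` with probability
at least `1 - v / ε² = 1 - ε`, and this event lies inside `{Z ≥ t}` because `t < Δ - ε`. On it,
`Z - t ∈ [0, 2Δ)` needs no reduction mod `2Δ` and `|(Z - t) - Δ|` is within `|Z - Δ| < ε` of `t`,
so the integrand is within `L ε` of `g t`; elsewhere it is within `2G`. Dividing by
`ℙ(Z ≥ t) ≥ 1 - ε` gives the bound.
-/

lemma rmod_nonneg {Δ : ℝ} (hΔ : 0 ≤ Δ) (x : ℝ) : 0 ≤ rmod Δ x :=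
  mul_nonneg (by positivity) (Int.fract_nonneg _)

lemma rmod_le {Δ : ℝ} (hΔ : 0 ≤ Δ) (x : ℝ) : rmod Δ x ≤ 2 * Δ :=
  mul_le_of_le_one_right (by positivity) (Int.fract_lt_one _).le

lemma rmod_of_mem_Ico {Δ x : ℝ} (hx : x ∈ Set.Ico 0 (2 * Δ)) : rmod Δ x = x := by
  have h2Δ : 0 < 2 * Δ := hx.1.trans_lt hx.2
  have hΔ : Δ ≠ 0 := (by linarith : (0 : ℝ) < Δ).ne'
  rw [rmod, Int.fract_eq_self.2 ⟨div_nonneg hx.1 h2Δ.le, (div_lt_one h2Δ).2 hx.2⟩]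
  field_simp

lemma abs_rmod_sub_mem_Icc {Δ : ℝ} (hΔ : 0 ≤ Δ) (x : ℝ) :
    |rmod Δ x - Δ| ∈ Set.Icc 0 Δ := by
  have h0 := rmod_nonneg hΔ x
  have h2Δ := rmod_le hΔ x
  exact ⟨abs_nonneg _, abs_le.2 ⟨by linarith, by linarith⟩⟩

lemma measurable_rmod (Δ : ℝ) : Measurable (rmod Δ) :=
  measurable_const.mul (measurable_id.div_const _).fract

lemma abs_abs_rmod_sub_sub_le {Δ t z : ℝ} (ht : 0 ≤ t) (hz : z - t ∈ Set.Ico 0 (2 * Δ)) :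
    |(|rmod Δ (z - t) - Δ|) - t| ≤ |z - Δ| := by
  rw [rmod_of_mem_Ico hz]
  calc |(|z - t - Δ|) - t| = |(|z - t - Δ|) - (|-t|)| := by rw [abs_neg, abs_of_nonneg ht]
    _ ≤ |z - t - Δ - -t| := abs_abs_sub_abs_le_abs_sub _ _
    _ = |z - Δ| := by ring_nf

section Lipschitz

variable {g : ℝ → ℝ} {Δ t G L : ℝ}

lemma nonneg_of_abs_sub_le_mul_abs_sub
    (hL : ∀ x ∈ Set.Icc (0 : ℝ) Δ, ∀ y ∈ Set.Icc (0 : ℝ) Δ, |g x - g y| ≤ L * |x - y|)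
    (hΔ : 0 < Δ) : 0 ≤ L := by
  have h := (abs_nonneg _).trans (hL Δ ⟨hΔ.le, le_rfl⟩ 0 ⟨le_rfl, hΔ.le⟩)
  rw [sub_zero, abs_of_pos hΔ] at h
  exact nonneg_of_mul_nonneg_left h hΔ

lemma abs_apply_abs_rmod_sub_sub_le_mul
    (hL : ∀ x ∈ Set.Icc (0 : ℝ) Δ, ∀ y ∈ Set.Icc (0 : ℝ) Δ, |g x - g y| ≤ L * |x - y|)
    (hL0 : 0 ≤ L) (ht : t ∈ Set.Icc 0 Δ) {z : ℝ} (hz : z - t ∈ Set.Ico 0 (2 * Δ)) :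
    |g (|rmod Δ (z - t) - Δ|) - g t| ≤ L * |z - Δ| :=
  (hL _ (abs_rmod_sub_mem_Icc (ht.1.trans ht.2) _) t ht).trans
    (mul_le_mul_of_nonneg_left (abs_abs_rmod_sub_sub_le ht.1 hz) hL0)

lemma abs_apply_abs_rmod_sub_sub_le_two_mul (hG : ∀ x ∈ Set.Icc (0 : ℝ) Δ, |g x| ≤ G)
    (ht : t ∈ Set.Icc 0 Δ) (z : ℝ) : |g (|rmod Δ (z - t) - Δ|) - g t| ≤ 2 * G := by
  linarith [abs_sub (g (|rmod Δ (z - t) - Δ|)) (g t),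
    hG _ (abs_rmod_sub_mem_Icc (ht.1.trans ht.2) (z - t)), hG t ht]

end Lipschitz

lemma one_sub_variance_div_sq_le_probReal {Ω : Type*} [MeasurableSpace Ω] {μ : Measure Ω}
    [IsProbabilityMeasure μ] {X : Ω → ℝ} (hX : MemLp X 2 μ) {c : ℝ} (hc : 0 < c) :
    1 - variance X μ / c ^ 2 ≤ μ.real {ω | |X ω - μ[X]| < c} := by
  have hfar : μ.real {ω | c ≤ |X ω - μ[X]|} ≤ variance X μ / c ^ 2 :=
    ENNReal.toReal_le_of_le_ofReal (div_nonneg (variance_nonneg _ _) (sq_nonneg _))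
      (meas_ge_le_variance_div_sq hX hc)
  have hcover : (1 : ℝ) ≤ μ.real {ω | |X ω - μ[X]| < c} + μ.real {ω | c ≤ |X ω - μ[X]|} := by
    calc (1 : ℝ) = μ.real ({ω | |X ω - μ[X]| < c} ∪ {ω | c ≤ |X ω - μ[X]|}) := by
          rw [← probReal_univ (μ := μ)]
          congr 1
          ext ω
          simp [lt_or_ge]
      _ ≤ _ := measureReal_union_le _ _
  linarith

lemma abs_setIntegral_sub_le_of_inter_of_sdiff {Ω : Type*} [MeasurableSpace Ω] {μ : Measure Ω}
    [IsFiniteMeasure μ] {s t : Set Ω} (ht : MeasurableSet t) {f : Ω → ℝ}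
    (hf : IntegrableOn f s μ) {c a b : ℝ} (ha : ∀ ω ∈ s ∩ t, |f ω - c| ≤ a)
    (hb : ∀ ω ∈ s \ t, |f ω - c| ≤ b) :
    |∫ ω in s, f ω ∂μ - c * μ.real s| ≤ a * μ.real (s ∩ t) + b * μ.real (s \ t) := by
  have hfc : IntegrableOn (fun ω => f ω - c) s μ := hf.sub integrableOn_const
  have hsub : ∫ ω in s, f ω ∂μ - c * μ.real s = ∫ ω in s, (f ω - c) ∂μ := by
    rw [integral_sub hf integrableOn_const, setIntegral_const, smul_eq_mul, mul_comm]
  have hpiece : ∀ r d, (∀ ω ∈ r, |f ω - c| ≤ d) →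
      |∫ ω in r, (f ω - c) ∂μ| ≤ d * μ.real r := fun r d hd =>
    norm_setIntegral_le_of_norm_le_const (f := fun ω => f ω - c) (measure_lt_top _ _) hd
  rw [hsub, ← integral_inter_add_sdiff ht hfc]
  exact (abs_add_le _ _).trans (add_le_add (hpiece _ _ ha) (hpiece _ _ hb))

lemma abs_div_sub_le_of_abs_sub_mul_le {I c p a b ε : ℝ} (hε0 : 0 ≤ ε) (hε1 : ε < 1)
    (hp : 1 - ε ≤ p) (ha : 0 ≤ a) (hb : 0 ≤ b) (h : |I - c * p| ≤ a * p + b) :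
    |I / p - c| ≤ (a + b) / (1 - ε) := by
  have hp0 : 0 < p := by linarith
  rw [div_sub' hp0.ne', abs_div, abs_of_pos hp0, div_le_div_iff₀ hp0 (by linarith), mul_comm p c]
  nlinarith [mul_le_mul_of_nonneg_right h (by linarith : 0 ≤ 1 - ε),
    mul_nonneg (mul_nonneg ha hp0.le) hε0, mul_nonneg hb (sub_nonneg.2 hp)]

lemma abs_setIntegral_div_sub_le {Ω : Type*} [MeasurableSpace Ω] {μ : Measure Ω}
    [IsProbabilityMeasure μ] {s t : Set Ω} (ht : MeasurableSet t) (hts : t ⊆ s) {ε : ℝ}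
    (hε0 : 0 ≤ ε) (hε1 : ε < 1) (hμt : 1 - ε ≤ μ.real t) {f : Ω → ℝ} (hf : IntegrableOn f s μ)
    {c a b : ℝ} (ha : 0 ≤ a) (hb : 0 ≤ b) (hfa : ∀ ω ∈ s ∩ t, |f ω - c| ≤ a)
    (hfb : ∀ ω ∈ s \ t, |f ω - c| ≤ b) :
    |(∫ ω in s, f ω ∂μ) / μ.real s - c| ≤ (a + b * ε) / (1 - ε) := by
  have hsdiff : μ.real (s \ t) ≤ ε := by
    linarith [measureReal_mono (μ := μ) (Set.sdiff_subset_compl s t),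
      probReal_compl_eq_one_sub (μ := μ) ht]
  refine abs_div_sub_le_of_abs_sub_mul_le hε0 hε1 (hμt.trans (measureReal_mono hts)) ha
    (mul_nonneg hb hε0) ?_
  exact (abs_setIntegral_sub_le_of_inter_of_sdiff ht hf hfa hfb).trans
    (add_le_add (mul_le_mul_of_nonneg_left (measureReal_mono Set.inter_subset_left) ha)
      (mul_le_mul_of_nonneg_left hsdiff hb))

theorem closing_operator_evaluates_general
    {Ω : Type*} [MeasureSpace Ω] [IsProbabilityMeasure (ℙ : Measure Ω)]
    (Z : Ω → ℝ) (hZmeas : Measurable Z)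
    (hZsq : Integrable (fun ω => (Z ω) ^ 2))
    (Δ v : ℝ) (hΔ : Δ = ∫ ω, Z ω) (hΔpos : 0 < Δ)
    (hv : v = variance Z ℙ) (hvpos : 0 < v) (hvlt : v ^ ((1 : ℝ) / 3) < 1)
    (t : ℝ) (ht0 : 0 ≤ t) (ht : t < Δ - v ^ ((1 : ℝ) / 3))
    (g : ℝ → ℝ) (hgmeas : Measurable g)
    (G L : ℝ)
    (hG : ∀ x ∈ Set.Icc (0 : ℝ) Δ, |g x| ≤ G)
    (hL : ∀ x ∈ Set.Icc (0 : ℝ) Δ, ∀ y ∈ Set.Icc (0 : ℝ) Δ, |g x - g y| ≤ L * |x - y|) :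
    0 < (ℙ {ω | t ≤ Z ω}).toReal
    ∧ |(∫ ω in {ω | t ≤ Z ω}, g (|rmod Δ (Z ω - t) - Δ|)) / (ℙ {ω | t ≤ Z ω}).toReal
        - g t|
      ≤ (2 * G + L) * v ^ ((1 : ℝ) / 3) / (1 - v ^ ((1 : ℝ) / 3)) := by
  set ε := v ^ ((1 : ℝ) / 3) with hε
  have hε0 : 0 < ε := Real.rpow_pos_of_pos hvpos _
  have hvε : v / ε ^ 2 = ε := by
    rw [div_eq_iff (by positivity), ← pow_succ', hε, ← Real.rpow_natCast,
      ← Real.rpow_mul hvpos.le]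
    norm_num
  set A := {ω | t ≤ Z ω}
  set B := {ω | |Z ω - Δ| < ε}
  rw [← measureReal_def]
  have hBm : MeasurableSet B := measurableSet_lt (hZmeas.sub_const Δ).abs measurable_const
  have hBA : B ⊆ A := fun ω (hω : |Z ω - Δ| < ε) => show t ≤ Z ω by linarith [abs_lt.1 hω]
  have hB : 1 - ε ≤ volume.real B := by
    have hZ2 : MemLp Z 2 := (memLp_two_iff_integrable_sq hZmeas.aestronglyMeasurable).2 hZsq
    simpa only [← hv, hvε, ← hΔ] using one_sub_variance_div_sq_le_probReal hZ2 hε0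
  have htIcc : t ∈ Set.Icc 0 Δ := ⟨ht0, by linarith⟩
  have hG0 : 0 ≤ G := (abs_nonneg _).trans (hG t htIcc)
  have hL0 : 0 ≤ L := nonneg_of_abs_sub_le_mul_abs_sub hL hΔpos
  have hF : Integrable fun ω => g (|rmod Δ (Z ω - t) - Δ|) := by
    refine .of_bound (hgmeas.comp ?_).aestronglyMeasurable G
      (.of_forall fun ω => hG _ (abs_rmod_sub_mem_Icc hΔpos.le _))
    exact (((measurable_rmod Δ).comp (hZmeas.sub_const t)).sub_const Δ).abs
  refine ⟨by linarith [measureReal_mono (μ := ℙ) hBA], ?_⟩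
  refine (abs_setIntegral_div_sub_le hBm hBA hε0.le hvlt hB hF.integrableOn
    (mul_nonneg hL0 hε0.le) (by positivity : 0 ≤ 2 * G) ?_ ?_).trans_eq (by ring)
  · rintro ω ⟨-, hω : |Z ω - Δ| < ε⟩
    have hfold : Z ω - t ∈ Set.Ico 0 (2 * Δ) := by constructor <;> linarith [abs_lt.1 hω]
    exact (abs_apply_abs_rmod_sub_sub_le_mul hL hL0 htIcc hfold).trans
      (mul_le_mul_of_nonneg_left hω.le hL0)
  · exact fun ω _ => abs_apply_abs_rmod_sub_sub_le_two_mul hG htIcc _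

/-- the closing operator evaluates `g` at the grid point:
`|𝔼[g(|((Z-t) mod 2Δ) - Δ|) ∣ Z ≥ t] - g(t)| ≤ (2G + L)·v^{1/3}/(1 - v^{1/3})`. -/
theorem closing_operator_evaluates
    {Ω : Type*} [MeasureSpace Ω] [IsProbabilityMeasure (ℙ : Measure Ω)]
    (Z : Ω → ℝ) (hZmeas : Measurable Z)
    (hZnn : ∀ᵐ ω ∂ℙ, 0 ≤ Z ω)
    (hZint : Integrable Z) (hZsq : Integrable (fun ω => (Z ω) ^ 2))
    (Δ v : ℝ) (hΔ : Δ = ∫ ω, Z ω) (hΔpos : 0 < Δ)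
    (hv : v = variance Z ℙ) (hvpos : 0 < v) (hvlt : v ^ ((1 : ℝ) / 3) < 1)
    (t : ℝ) (ht0 : 0 ≤ t) (ht : t < Δ - v ^ ((1 : ℝ) / 3))
    (g : ℝ → ℝ) (hgmeas : Measurable g)
    (G L : ℝ)
    (hG : ∀ x ∈ Set.Icc (0 : ℝ) Δ, |g x| ≤ G)
    (hL : ∀ x ∈ Set.Icc (0 : ℝ) Δ, ∀ y ∈ Set.Icc (0 : ℝ) Δ, |g x - g y| ≤ L * |x - y|) :
    0 < (ℙ {ω | t ≤ Z ω}).toReal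
    ∧ |(∫ ω in {ω | t ≤ Z ω}, g (|rmod Δ (Z ω - t) - Δ|)) / (ℙ {ω | t ≤ Z ω}).toReal
        - g t|
      ≤ (2 * G + L) * v ^ ((1 : ℝ) / 3) / (1 - v ^ ((1 : ℝ) / 3)) :=
  closing_operator_evaluates_general Z hZmeas hZsq Δ v hΔ hΔpos hv hvpos hvlt t ht0 ht g hgmeas G L
    hG hL
end
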